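/- arXiv:2511.01890 — 8 statements merged into one kernel-verified Lean document; each statement's English description precedes it below -/
import Mathlib

section
/- For every real number c, the convex hull of the set U₊ = {x ∈ ℝ⁸ | q x > c} is all of ℝ⁸. -/
/-- For every real number `c`, the convex hull of
`U₊ = {x ∈ ℝ⁸ | (x 0)² + (x 1)² − (x 2)² − (x 3)² > c}` is all of `ℝ⁸`. -/
theorem convexHull_quadric_central_gt (c : ℝ) :
    convexHull ℝ {x : Fin 8 → ℝ |
      (x 0) ^ 2 + (x 1) ^ 2 - (x 2) ^ 2 - (x 3) ^ 2 > c} = Set.univ := by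
  ext x
  simp only [Set.mem_univ, iff_true]
  set K : ℝ := c + (x 2) ^ 2 + (x 3) ^ 2 - (x 1) ^ 2 with hK
  set t : ℝ := |x 0| + |K| + 1 with ht
  set e : Fin 8 → ℝ := Pi.single 0 1 with he
  have hmem : ∀ s : ℝ, |s| ≥ t → (x + s • e) ∈ {x : Fin 8 → ℝ |
      (x 0) ^ 2 + (x 1) ^ 2 - (x 2) ^ 2 - (x 3) ^ 2 > c} := by
    intro s hs
    have h0 : (x + s • e) 0 = x 0 + s := by simp [he]
    have h1 : (x + s • e) 1 = x 1 := by simp [he, Pi.single_apply]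
    have h2 : (x + s • e) 2 = x 2 := by simp [he, Pi.single_apply]
    have h3 : (x + s • e) 3 = x 3 := by simp [he, Pi.single_apply]
    simp only [Set.mem_setOf_eq, h0, h1, h2, h3]
    have habs : |x 0 + s| ≥ |K| + 1 := by
      have htri : |s| ≤ |x 0 + s| + |x 0| := by
        calc |s| = |(x 0 + s) + (-(x 0))| := by ring_nf
        _ ≤ |x 0 + s| + |-(x 0)| := abs_add_le _ _
        _ = |x 0 + s| + |x 0| := by rw [abs_neg]
      rw [ht] at hs
      linarith
    have : (x 0 + s) ^ 2 ≥ (|K| + 1) ^ 2 := by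
      have := sq_abs (x 0 + s)
      nlinarith [abs_nonneg K, abs_nonneg (x 0 + s)]
    have hKle : K ≤ |K| := le_abs_self K
    nlinarith [abs_nonneg K]
  have ha := hmem t (by rw [abs_of_nonneg] ; positivity)
  have hb := hmem (-t) (by rw [abs_neg, abs_of_nonneg] ; positivity)
  have hx : x = midpoint ℝ (x + t • e) (x + (-t) • e) := by
    have : x + (-t) • e = x - t • e := by module
    rw [this, midpoint_add_sub]
  rw [hx]
  exact segment_subset_convexHull ha hb (midpoint_mem_segment _ _)
end

section
/- For every real number c, the convex hull of the set U₋ = {x ∈ ℝ⁸ | q x < c} is all of ℝ⁸. -/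
/-- For every real number `c`, the convex hull of
`U₋ = {x ∈ ℝ⁸ | (x 0)² + (x 1)² − (x 2)² − (x 3)² < c}` is all of `ℝ⁸`. -/
theorem convexHull_quadric_central_lt (c : ℝ) :
    convexHull ℝ {x : Fin 8 → ℝ |
      (x 0) ^ 2 + (x 1) ^ 2 - (x 2) ^ 2 - (x 3) ^ 2 < c} = Set.univ := by
  apply Set.eq_univ_of_forall
  intro x
  set q : ℝ := (x 0) ^ 2 + (x 1) ^ 2 - (x 2) ^ 2 - (x 3) ^ 2 with hq
  set t : ℝ := 2 * |x 2| + |q| + |c| + 1 with ht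
  have ha2 := abs_nonneg (x 2)
  have haq := le_abs_self q
  have hac := neg_abs_le c
  have hax2 := abs_nonneg (x 2)
  have hx2a := le_abs_self (x 2)
  have hx2b := neg_abs_le (x 2)
  have ht1 : (1 : ℝ) ≤ t := by
    have := abs_nonneg q; have := abs_nonneg c; linarith
  have hqc : ∀ s : ℝ, 2 * s * x 2 + s * s ≥ 2 * t * x 2 + t * t ∨ True := fun _ => Or.inr trivial
  have hy : (x 0) ^ 2 + (x 1) ^ 2 - (x 2 + t) ^ 2 - (x 3) ^ 2 < c := by
    have key : t * t - 2 * t * |x 2| ≥ |q| + |c| + 1 := by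
      have h0 : t * (t - 2 * |x 2|) = t * (|q| + |c| + 1) := by rw [ht]; ring
      nlinarith [mul_le_mul_of_nonneg_right ht1 (show (0:ℝ) ≤ |q| + |c| + 1 by positivity)]
    nlinarith
  have hz : (x 0) ^ 2 + (x 1) ^ 2 - (x 2 - t) ^ 2 - (x 3) ^ 2 < c := by
    have key : t * t - 2 * t * |x 2| ≥ |q| + |c| + 1 := by
      have h0 : t * (t - 2 * |x 2|) = t * (|q| + |c| + 1) := by rw [ht]; ring
      nlinarith [mul_le_mul_of_nonneg_right ht1 (show (0:ℝ) ≤ |q| + |c| + 1 by positivity)]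
    nlinarith
  set y : Fin 8 → ℝ := Function.update x 2 (x 2 + t) with hyd
  set z : Fin 8 → ℝ := Function.update x 2 (x 2 - t) with hzd
  have hyS : y ∈ {x : Fin 8 → ℝ |
      (x 0) ^ 2 + (x 1) ^ 2 - (x 2) ^ 2 - (x 3) ^ 2 < c} := by
    simp only [Set.mem_setOf_eq, hyd, Function.update_of_ne (by decide : (0:Fin 8) ≠ 2),
      Function.update_of_ne (by decide : (1:Fin 8) ≠ 2),
      Function.update_of_ne (by decide : (3:Fin 8) ≠ 2), Function.update_self]
    exact hy
  have hzS : z ∈ {x : Fin 8 → ℝ |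
      (x 0) ^ 2 + (x 1) ^ 2 - (x 2) ^ 2 - (x 3) ^ 2 < c} := by
    simp only [Set.mem_setOf_eq, hzd, Function.update_of_ne (by decide : (0:Fin 8) ≠ 2),
      Function.update_of_ne (by decide : (1:Fin 8) ≠ 2),
      Function.update_of_ne (by decide : (3:Fin 8) ≠ 2), Function.update_self]
    exact hz
  have hmid : midpoint ℝ y z = x := by
    funext i
    by_cases h : i = 2
    · subst h
      simp only [hyd, hzd, midpoint_eq_smul_add, Pi.smul_apply, Pi.add_apply,
        Function.update_self, smul_eq_mul, invOf_eq_inv]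
      ring
    · simp only [hyd, hzd, midpoint_eq_smul_add, Pi.smul_apply, Pi.add_apply,
        Function.update_of_ne h, smul_eq_mul, invOf_eq_inv]
      ring
  have := segment_subset_convexHull (𝕜 := ℝ) hyS hzS (midpoint_mem_segment y z)
  rwa [hmid] at this
end

section
/- The convex hull of the set U₊ = {x ∈ ℝ⁸ | p x > 0} is all of ℝ⁸. -/
/-- The convex hull of
`U₊ = {x ∈ ℝ⁸ | (x 0)² + (x 1)² − (x 2)² − (x 3)² + x 4 > 0}` is all of `ℝ⁸`. -/
theorem convexHull_quadric_noncentral_gt :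
    convexHull ℝ {x : Fin 8 → ℝ |
      (x 0) ^ 2 + (x 1) ^ 2 - (x 2) ^ 2 - (x 3) ^ 2 + x 4 > 0} = Set.univ := by
  apply Set.eq_univ_of_forall
  intro x
  set t : ℝ := 2 * |x 0| + |(x 0) ^ 2 + (x 1) ^ 2 - (x 2) ^ 2 - (x 3) ^ 2 + x 4| + 1 with ht
  have h0 : |x 0| ≥ x 0 := le_abs_self _
  have h0' : |x 0| ≥ -(x 0) := neg_le_abs _
  have hc : |(x 0) ^ 2 + (x 1) ^ 2 - (x 2) ^ 2 - (x 3) ^ 2 + x 4| ≥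
      -((x 0) ^ 2 + (x 1) ^ 2 - (x 2) ^ 2 - (x 3) ^ 2 + x 4) := neg_le_abs _
  have h0abs : (0:ℝ) ≤ |x 0| := abs_nonneg _
  have hcabs : (0:ℝ) ≤ |(x 0) ^ 2 + (x 1) ^ 2 - (x 2) ^ 2 - (x 3) ^ 2 + x 4| := abs_nonneg _
  have hy : Function.update x 0 (x 0 + t) ∈ {x : Fin 8 → ℝ |
      (x 0) ^ 2 + (x 1) ^ 2 - (x 2) ^ 2 - (x 3) ^ 2 + x 4 > 0} := by
    simp only [Set.mem_setOf_eq, Function.update_self,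
      Function.update_of_ne (show (1:Fin 8) ≠ 0 by decide),
      Function.update_of_ne (show (2:Fin 8) ≠ 0 by decide),
      Function.update_of_ne (show (3:Fin 8) ≠ 0 by decide),
      Function.update_of_ne (show (4:Fin 8) ≠ 0 by decide)]
    nlinarith [sq_nonneg (x 0), sq_nonneg t]
  have hz : Function.update x 0 (x 0 - t) ∈ {x : Fin 8 → ℝ |
      (x 0) ^ 2 + (x 1) ^ 2 - (x 2) ^ 2 - (x 3) ^ 2 + x 4 > 0} := by
    simp only [Set.mem_setOf_eq, Function.update_self,
      Function.update_of_ne (show (1:Fin 8) ≠ 0 by decide),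
      Function.update_of_ne (show (2:Fin 8) ≠ 0 by decide),
      Function.update_of_ne (show (3:Fin 8) ≠ 0 by decide),
      Function.update_of_ne (show (4:Fin 8) ≠ 0 by decide)]
    nlinarith [sq_nonneg (x 0), sq_nonneg t]
  have hmid : (1/2 : ℝ) • Function.update x 0 (x 0 + t) +
      (1/2 : ℝ) • Function.update x 0 (x 0 - t) = x := by
    funext i
    simp only [Pi.add_apply, Pi.smul_apply, smul_eq_mul, Function.update_apply]
    split_ifs with h
    · subst h; ring
    · ring
  exact segment_subset_convexHull hy hz
    ⟨(1/2 : ℝ), (1/2 : ℝ), by norm_num, by norm_num, by norm_num, hmid⟩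
end

section
/- The convex hull of the set U₋ = {x ∈ ℝ⁸ | p x < 0} is all of ℝ⁸. -/
/-- The convex hull of
`U₋ = {x ∈ ℝ⁸ | (x 0)² + (x 1)² − (x 2)² − (x 3)² + x 4 < 0}` is all of `ℝ⁸`. -/
theorem convexHull_quadric_noncentral_lt :
    convexHull ℝ {x : Fin 8 → ℝ |
      (x 0) ^ 2 + (x 1) ^ 2 - (x 2) ^ 2 - (x 3) ^ 2 + x 4 < 0} = Set.univ := by
  apply Set.eq_univ_of_forall
  intro x
  set S : Set (Fin 8 → ℝ) := {x : Fin 8 → ℝ |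
      (x 0) ^ 2 + (x 1) ^ 2 - (x 2) ^ 2 - (x 3) ^ 2 + x 4 < 0}
  set px : ℝ := (x 0) ^ 2 + (x 1) ^ 2 - (x 2) ^ 2 - (x 3) ^ 2 + x 4 with hpx
  set t : ℝ := 2 * |x 2| + |px| + 1 with ht
  have ht0 : 0 < t := by positivity
  set y : Fin 8 → ℝ := Function.update x 2 (x 2 + t) with hy
  set z : Fin 8 → ℝ := Function.update x 2 (x 2 - t) with hz
  have hy0 : y 0 = x 0 := by simp [hy]
  have hy1 : y 1 = x 1 := by simp [hy]
  have hy2 : y 2 = x 2 + t := by simp [hy]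
  have hy3 : y 3 = x 3 := by simp [hy]
  have hy4 : y 4 = x 4 := by simp [hy]
  have hz0 : z 0 = x 0 := by simp [hz]
  have hz1 : z 1 = x 1 := by simp [hz]
  have hz2 : z 2 = x 2 - t := by simp [hz]
  have hz3 : z 3 = x 3 := by simp [hz]
  have hz4 : z 4 = x 4 := by simp [hz]
  have hx2 : x 2 ≤ |x 2| := le_abs_self _
  have hx2' : -(x 2) ≤ |x 2| := neg_le_abs _
  have hpxle : px ≤ |px| := le_abs_self _
  have hyS : y ∈ S := by
    simp only [S, Set.mem_setOf_eq, hy0, hy1, hy2, hy3, hy4]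
    have : (x 0) ^ 2 + (x 1) ^ 2 - (x 2 + t) ^ 2 - (x 3) ^ 2 + x 4
        = px - 2 * t * x 2 - t ^ 2 := by rw [hpx]; ring
    rw [this]
    nlinarith [abs_nonneg (x 2), abs_nonneg px]
  have hzS : z ∈ S := by
    simp only [S, Set.mem_setOf_eq, hz0, hz1, hz2, hz3, hz4]
    have : (x 0) ^ 2 + (x 1) ^ 2 - (x 2 - t) ^ 2 - (x 3) ^ 2 + x 4
        = px + 2 * t * x 2 - t ^ 2 := by rw [hpx]; ring
    rw [this]
    nlinarith [abs_nonneg (x 2), abs_nonneg px]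
  have hmid : x = (1/2 : ℝ) • y + (1/2 : ℝ) • z := by
    funext i
    by_cases hi : i = 2
    · subst hi
      simp [hy2, hz2]
      ring
    · simp [hy, hz, Function.update_of_ne hi, Pi.add_apply, Pi.smul_apply]
      ring
  rw [hmid]
  exact (convex_convexHull ℝ S) (subset_convexHull ℝ S hyS) (subset_convexHull ℝ S hzS)
    (by norm_num) (by norm_num) (by norm_num)
end

section
/- For every real number c, each of the two sets {x ∈ ℝ⁸ | q x > c} and {x ∈ ℝ⁸ | q x < c} is path-connected; consequently the complement of the quadric hypersurface {x ∈ ℝ⁸ | q x = c} is the union of these two path-connected open sets. -/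
open Set

private lemma seg_joinedIn {S : Set (Fin 8 → ℝ)} {x y : Fin 8 → ℝ}
    (h : ∀ u t : ℝ, 0 ≤ u → 0 ≤ t → u + t = 1 → u • x + t • y ∈ S) :
    JoinedIn S x y := by
  have hsub : segment ℝ x y ⊆ S := by
    rintro z ⟨u, t, hu, ht, hut, rfl⟩
    exact h u t hu ht hut
  have hpc : IsPathConnected (segment ℝ x y) :=
    (convex_segment x y).isPathConnected ⟨x, left_mem_segment ℝ x y⟩
  exact (hpc.joinedIn x (left_mem_segment ℝ x y) y (right_mem_segment ℝ x y)).mono hsub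

private def vv (a b : ℝ) : Fin 8 → ℝ := fun i => if i = 0 then a else if i = 1 then b else 0

private lemma key (c : ℝ) :
    IsPathConnected {x : Fin 8 → ℝ |
      (x 0) ^ 2 + (x 1) ^ 2 - (x 2) ^ 2 - (x 3) ^ 2 > c} := by
  set S := {x : Fin 8 → ℝ | (x 0) ^ 2 + (x 1) ^ 2 - (x 2) ^ 2 - (x 3) ^ 2 > c} with hS
  have f10 : (1:Fin 8) ≠ 0 := by decide
  have f20 : (2:Fin 8) ≠ 0 := by decide
  have f21 : (2:Fin 8) ≠ 1 := by decide
  have f30 : (3:Fin 8) ≠ 0 := by decide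
  have f31 : (3:Fin 8) ≠ 1 := by decide
  obtain ⟨R, hR1, hRc⟩ : ∃ R : ℝ, 1 ≤ R ∧ c < R ^ 2 := by
    refine ⟨Real.sqrt (max c 0) + 1, ?_, ?_⟩
    · have := Real.sqrt_nonneg (max c 0); linarith
    · have hsq : Real.sqrt (max c 0) ^ 2 = max c 0 := Real.sq_sqrt (le_max_right c 0)
      have h0 : c ≤ max c 0 := le_max_left c 0
      have := Real.sqrt_nonneg (max c 0)
      nlinarith
  have hR0 : (0:ℝ) ≤ R := by linarith
  -- joining two `vv` points when the relevant scalar inequality holds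
  have seg_vv : ∀ p q p' q' : ℝ, (∀ u t : ℝ, 0 ≤ u → 0 ≤ t → u + t = 1 →
      c < (u * p + t * p') ^ 2 + (u * q + t * q') ^ 2) →
      JoinedIn S (vv p q) (vv p' q') := by
    intro p q p' q' hsc
    apply seg_joinedIn
    intro u t hu ht hut
    simp only [hS, mem_setOf_eq, Pi.add_apply, Pi.smul_apply, smul_eq_mul, vv]
    simp [f10, f20, f21, f30, f31]
    linarith [hsc u t hu ht hut]
  have hb0 : vv 0 R ∈ S := by
    simp only [hS, mem_setOf_eq, vv]
    simp [f10, f20, f21, f30, f31]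
    linarith
  refine ⟨vv 0 R, hb0, ?_⟩
  intro x hx
  have hx' : (x 0) ^ 2 + (x 1) ^ 2 - (x 2) ^ 2 - (x 3) ^ 2 > c := hx
  obtain ⟨M, hMa, hMb, hMR⟩ : ∃ M : ℝ, |x 0| ≤ M ∧ |x 1| ≤ M ∧ R ≤ M := by
    refine ⟨|x 0| + |x 1| + R, ?_, ?_, ?_⟩ <;>
      [skip; skip; skip] <;>
      (have := abs_nonneg (x 0); have := abs_nonneg (x 1); linarith)
  have hM0 : 0 ≤ M := le_trans hR0 hMR
  have hMc : c < M ^ 2 := by nlinarith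
  have hab : c < (x 0) ^ 2 + (x 1) ^ 2 := by nlinarith [sq_nonneg (x 2), sq_nonneg (x 3)]
  have h1 : JoinedIn S x (vv (x 0) (x 1)) := by
    apply seg_joinedIn
    intro u t hu ht hut
    simp only [hS, mem_setOf_eq, Pi.add_apply, Pi.smul_apply, smul_eq_mul, vv]
    simp [f10, f20, f21, f30, f31]
    have e0 : u * x 0 + t * x 0 = x 0 := by
      have h : u = 1 - t := by linarith
      rw [h]; ring
    have e1 : u * x 1 + t * x 1 = x 1 := by
      have h : u = 1 - t := by linarith
      rw [h]; ring
    have hu1 : u ≤ 1 := by linarith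
    have hu2 : u ^ 2 ≤ 1 := by nlinarith
    have k2 : (u * x 2) ^ 2 ≤ (x 2) ^ 2 := by
      nlinarith [mul_le_mul_of_nonneg_right hu2 (sq_nonneg (x 2))]
    have k3 : (u * x 3) ^ 2 ≤ (x 3) ^ 2 := by
      nlinarith [mul_le_mul_of_nonneg_right hu2 (sq_nonneg (x 3))]
    rw [e0, e1]
    linarith [hx']
  have hlast : JoinedIn S (vv 0 M) (vv 0 R) := by
    apply seg_vv
    intro u t hu ht hut
    have h : R ≤ u * M + t * R := by nlinarith [mul_nonneg hu (sub_nonneg.mpr hMR)]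
    have h2 : R ^ 2 ≤ (u * M + t * R) ^ 2 := pow_le_pow_left₀ hR0 h 2
    nlinarith [sq_nonneg (u * 0 + t * 0)]
  have hmid : JoinedIn S x (vv 0 M) := by
    rcases le_or_gt 0 (x 1) with hb | hb
    · have hbM : x 1 ≤ M := le_trans (le_abs_self _) hMb
      have h2 : JoinedIn S (vv (x 0) (x 1)) (vv (x 0) M) := by
        apply seg_vv
        intro u t hu ht hut
        have e0 : u * x 0 + t * x 0 = x 0 := by
          have h : u = 1 - t := by linarith
          rw [h]; ring
        have hv : x 1 ≤ u * x 1 + t * M := by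
          nlinarith [mul_nonneg ht (sub_nonneg.mpr hbM)]
        have h2 : (x 1) ^ 2 ≤ (u * x 1 + t * M) ^ 2 := pow_le_pow_left₀ hb hv 2
        rw [e0]; linarith [hab]
      have h3 : JoinedIn S (vv (x 0) M) (vv 0 M) := by
        apply seg_vv
        intro u t hu ht hut
        have e1 : u * M + t * M = M := by
          have h : u = 1 - t := by linarith
          rw [h]; ring
        rw [e1]
        linarith [hMc, sq_nonneg (u * x 0 + t * 0)]
      exact (h1.trans h2).trans h3
    · have hbM : -M ≤ x 1 := by
        have : -(x 1) ≤ |x 1| := neg_le_abs (x 1)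
        linarith
      have h2 : JoinedIn S (vv (x 0) (x 1)) (vv (x 0) (-M)) := by
        apply seg_vv
        intro u t hu ht hut
        have e0 : u * x 0 + t * x 0 = x 0 := by
          have h : u = 1 - t := by linarith
          rw [h]; ring
        have hv : u * x 1 + t * (-M) ≤ x 1 := by
          nlinarith [mul_nonneg ht (sub_nonneg.mpr hbM)]
        have hv0 : u * x 1 + t * (-M) ≤ 0 := le_trans hv hb.le
        have h2 : (x 1) ^ 2 ≤ (u * x 1 + t * (-M)) ^ 2 := by
          rw [← neg_sq (u * x 1 + t * (-M)), ← neg_sq (x 1)]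
          exact pow_le_pow_left₀ (by linarith) (by linarith) 2
        rw [e0]; linarith [hab]
      have hM2 : (-M) ^ 2 = M ^ 2 := by ring
      have h3 : JoinedIn S (vv (x 0) (-M)) (vv 0 (-M)) := by
        apply seg_vv
        intro u t hu ht hut
        have e1 : u * (-M) + t * (-M) = -M := by
          have h : u = 1 - t := by linarith
          rw [h]; ring
        rw [e1, hM2]
        linarith [hMc, sq_nonneg (u * x 0 + t * 0)]
      have h4 : JoinedIn S (vv 0 (-M)) (vv M (-M)) := by
        apply seg_vv
        intro u t hu ht hut
        have e1 : u * (-M) + t * (-M) = -M := by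
          have h : u = 1 - t := by linarith
          rw [h]; ring
        rw [e1, hM2]
        linarith [hMc, sq_nonneg (u * 0 + t * M)]
      have h5 : JoinedIn S (vv M (-M)) (vv M M) := by
        apply seg_vv
        intro u t hu ht hut
        have e0 : u * M + t * M = M := by
          have h : u = 1 - t := by linarith
          rw [h]; ring
        rw [e0]
        linarith [hMc, sq_nonneg (u * (-M) + t * M)]
      have h6 : JoinedIn S (vv M M) (vv 0 M) := by
        apply seg_vv
        intro u t hu ht hut
        have e1 : u * M + t * M = M := by
          have h : u = 1 - t := by linarith
          rw [h]; ring
        rw [e1]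
        linarith [hMc, sq_nonneg (u * M + t * 0)]
      exact ((((h1.trans h2).trans h3).trans h4).trans h5).trans h6
  exact (hmid.trans hlast).symm

private def sw : Fin 8 → Fin 8 := ![2, 3, 0, 1, 4, 5, 6, 7]

private lemma key2 (c : ℝ) :
    IsPathConnected {x : Fin 8 → ℝ |
      (x 0) ^ 2 + (x 1) ^ 2 - (x 2) ^ 2 - (x 3) ^ 2 < c} := by
  have hcont : Continuous (fun x : Fin 8 → ℝ => fun i => x (sw i)) :=
    continuous_pi fun i => continuous_apply (sw i)
  have himg : (fun x : Fin 8 → ℝ => fun i => x (sw i)) ''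
      {x : Fin 8 → ℝ | (x 0) ^ 2 + (x 1) ^ 2 - (x 2) ^ 2 - (x 3) ^ 2 > -c} =
      {x : Fin 8 → ℝ | (x 0) ^ 2 + (x 1) ^ 2 - (x 2) ^ 2 - (x 3) ^ 2 < c} := by
    ext y
    constructor
    · rintro ⟨x, hx, rfl⟩
      simp only [Set.mem_setOf_eq] at hx ⊢
      show x (sw 0) ^ 2 + x (sw 1) ^ 2 - x (sw 2) ^ 2 - x (sw 3) ^ 2 < c
      have e0 : sw 0 = 2 := rfl
      have e1 : sw 1 = 3 := rfl
      have e2 : sw 2 = 0 := rfl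
      have e3 : sw 3 = 1 := rfl
      rw [e0, e1, e2, e3]
      linarith
    · intro hy
      refine ⟨fun i => y (sw i), ?_, ?_⟩
      · simp only [Set.mem_setOf_eq] at hy ⊢
        show y (sw 0) ^ 2 + y (sw 1) ^ 2 - y (sw 2) ^ 2 - y (sw 3) ^ 2 > -c
        have e0 : sw 0 = 2 := rfl
        have e1 : sw 1 = 3 := rfl
        have e2 : sw 2 = 0 := rfl
        have e3 : sw 3 = 1 := rfl
        rw [e0, e1, e2, e3]
        linarith
      · funext i
        show y (sw (sw i)) = y i
        congr 1
        fin_cases i <;> rfl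
  rw [← himg]
  exact (key (-c)).image hcont

/-- For every real `c`, both components of the complement of the central quadric
`{q = c}`, `q x = (x 0)² + (x 1)² − (x 2)² − (x 3)²`, are path-connected open sets,
and the complement of the quadric is their union. -/
theorem quadric_central_complement_pathConnected (c : ℝ) :
    IsPathConnected {x : Fin 8 → ℝ |
      (x 0) ^ 2 + (x 1) ^ 2 - (x 2) ^ 2 - (x 3) ^ 2 > c} ∧
    IsPathConnected {x : Fin 8 → ℝ |
      (x 0) ^ 2 + (x 1) ^ 2 - (x 2) ^ 2 - (x 3) ^ 2 < c} ∧
    IsOpen {x : Fin 8 → ℝ |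
      (x 0) ^ 2 + (x 1) ^ 2 - (x 2) ^ 2 - (x 3) ^ 2 > c} ∧
    IsOpen {x : Fin 8 → ℝ |
      (x 0) ^ 2 + (x 1) ^ 2 - (x 2) ^ 2 - (x 3) ^ 2 < c} ∧
    {x : Fin 8 → ℝ | (x 0) ^ 2 + (x 1) ^ 2 - (x 2) ^ 2 - (x 3) ^ 2 = c}ᶜ =
      {x : Fin 8 → ℝ | (x 0) ^ 2 + (x 1) ^ 2 - (x 2) ^ 2 - (x 3) ^ 2 > c} ∪
      {x : Fin 8 → ℝ | (x 0) ^ 2 + (x 1) ^ 2 - (x 2) ^ 2 - (x 3) ^ 2 < c} := by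
  have hq : Continuous (fun x : Fin 8 → ℝ =>
      (x 0) ^ 2 + (x 1) ^ 2 - (x 2) ^ 2 - (x 3) ^ 2) := by
    apply Continuous.sub
    apply Continuous.sub
    apply Continuous.add
    all_goals exact ((continuous_apply _).pow 2)
  refine ⟨key c, key2 c, ?_, ?_, ?_⟩
  · exact isOpen_lt continuous_const hq
  · exact isOpen_lt hq continuous_const
  · ext x
    simp only [Set.mem_compl_iff, Set.mem_setOf_eq, Set.mem_union]
    constructor
    · intro h
      rcases lt_or_gt_of_ne h with h | h
      · exact Or.inr h
      · exact Or.inl h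
    · rintro (h | h)
      · exact ne_of_gt h
      · exact ne_of_lt h
end

section
/- Each of the two sets {x ∈ ℝ⁸ | p x > 0} and {x ∈ ℝ⁸ | p x < 0} is path-connected; consequently the complement of the quadric hypersurface {x ∈ ℝ⁸ | p x = 0} is the union of these two path-connected open sets. -/
namespace QuadricAux

noncomputable def q (x : Fin 8 → ℝ) : ℝ := x 0 ^ 2 + x 1 ^ 2 - x 2 ^ 2 - x 3 ^ 2

lemma q_update (x : Fin 8 → ℝ) (v : ℝ) : q (Function.update x 4 v) = q x := by
  simp [q, Function.update]

lemma cont_q : Continuous q := by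
  unfold q; fun_prop

noncomputable def φ : (Fin 8 → ℝ) ≃ₜ (Fin 8 → ℝ) where
  toFun x := Function.update x 4 (x 4 - q x)
  invFun x := Function.update x 4 (x 4 + q x)
  left_inv x := by
    funext i
    rcases eq_or_ne i 4 with rfl | h
    · simp [q_update]
    · simp [Function.update_of_ne h]
  right_inv x := by
    funext i
    rcases eq_or_ne i 4 with rfl | h
    · simp [q_update]
    · simp [Function.update_of_ne h]
  continuous_toFun := by
    apply Continuous.update (continuous_id) 4
    exact (continuous_apply 4).sub cont_q
  continuous_invFun := by
    apply Continuous.update (continuous_id) 4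
    exact (continuous_apply 4).add cont_q

lemma φ_apply (x : Fin 8 → ℝ) (i : Fin 8) :
    φ x i = Function.update x 4 (x 4 - q x) i := rfl

lemma p_φ (x : Fin 8 → ℝ) :
    (φ x 0) ^ 2 + (φ x 1) ^ 2 - (φ x 2) ^ 2 - (φ x 3) ^ 2 + φ x 4 = x 4 := by
  rw [show φ x 0 = x 0 by rw [φ_apply]; exact Function.update_of_ne (by decide) _ _,
    show φ x 1 = x 1 by rw [φ_apply]; exact Function.update_of_ne (by decide) _ _,
    show φ x 2 = x 2 by rw [φ_apply]; exact Function.update_of_ne (by decide) _ _,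
    show φ x 3 = x 3 by rw [φ_apply]; exact Function.update_of_ne (by decide) _ _,
    show φ x 4 = x 4 - q x by rw [φ_apply]; exact Function.update_self _ _ _, q]
  ring

lemma image_pos :
    φ '' {x : Fin 8 → ℝ | x 4 > 0} =
      {x : Fin 8 → ℝ | (x 0) ^ 2 + (x 1) ^ 2 - (x 2) ^ 2 - (x 3) ^ 2 + x 4 > 0} := by
  ext y
  simp only [Set.mem_image, Set.mem_setOf_eq]
  constructor
  · rintro ⟨x, hx, rfl⟩; rwa [p_φ]
  · intro hy
    exact ⟨φ.symm y, by rw [← φ.apply_symm_apply y, p_φ] at hy; exact hy,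
      φ.apply_symm_apply y⟩

lemma image_neg :
    φ '' {x : Fin 8 → ℝ | x 4 < 0} =
      {x : Fin 8 → ℝ | (x 0) ^ 2 + (x 1) ^ 2 - (x 2) ^ 2 - (x 3) ^ 2 + x 4 < 0} := by
  ext y
  simp only [Set.mem_image, Set.mem_setOf_eq]
  constructor
  · rintro ⟨x, hx, rfl⟩; rwa [p_φ]
  · intro hy
    exact ⟨φ.symm y, by rw [← φ.apply_symm_apply y, p_φ] at hy; exact hy,
      φ.apply_symm_apply y⟩

lemma cont_p : Continuous fun x : Fin 8 → ℝ =>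
    (x 0) ^ 2 + (x 1) ^ 2 - (x 2) ^ 2 - (x 3) ^ 2 + x 4 := by fun_prop

lemma lin4 : IsLinearMap ℝ (fun x : Fin 8 → ℝ => x 4) :=
  ⟨fun _ _ => rfl, fun _ _ => rfl⟩

lemma halfspace_pc_pos : IsPathConnected {x : Fin 8 → ℝ | x 4 > 0} :=
  (convex_halfSpace_gt lin4 0).isPathConnected ⟨fun _ => 1, by norm_num⟩

lemma halfspace_pc_neg : IsPathConnected {x : Fin 8 → ℝ | x 4 < 0} :=
  (convex_halfSpace_lt lin4 0).isPathConnected ⟨fun _ => -1, by norm_num⟩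

end QuadricAux

open QuadricAux in
/-- Both components of the complement of the non-central quadric `{p = 0}`,
`p x = (x 0)² + (x 1)² − (x 2)² − (x 3)² + x 4`, are path-connected open sets,
and the complement of the quadric is their union. -/
theorem quadric_noncentral_complement_pathConnected :
    IsPathConnected {x : Fin 8 → ℝ |
      (x 0) ^ 2 + (x 1) ^ 2 - (x 2) ^ 2 - (x 3) ^ 2 + x 4 > 0} ∧
    IsPathConnected {x : Fin 8 → ℝ |
      (x 0) ^ 2 + (x 1) ^ 2 - (x 2) ^ 2 - (x 3) ^ 2 + x 4 < 0} ∧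
    IsOpen {x : Fin 8 → ℝ |
      (x 0) ^ 2 + (x 1) ^ 2 - (x 2) ^ 2 - (x 3) ^ 2 + x 4 > 0} ∧
    IsOpen {x : Fin 8 → ℝ |
      (x 0) ^ 2 + (x 1) ^ 2 - (x 2) ^ 2 - (x 3) ^ 2 + x 4 < 0} ∧
    {x : Fin 8 → ℝ | (x 0) ^ 2 + (x 1) ^ 2 - (x 2) ^ 2 - (x 3) ^ 2 + x 4 = 0}ᶜ =
      {x : Fin 8 → ℝ | (x 0) ^ 2 + (x 1) ^ 2 - (x 2) ^ 2 - (x 3) ^ 2 + x 4 > 0} ∪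
      {x : Fin 8 → ℝ | (x 0) ^ 2 + (x 1) ^ 2 - (x 2) ^ 2 - (x 3) ^ 2 + x 4 < 0} := by
  refine ⟨?_, ?_, ?_, ?_, ?_⟩
  · rw [← image_pos]
    exact halfspace_pc_pos.image φ.continuous
  · rw [← image_neg]
    exact halfspace_pc_neg.image φ.continuous
  · exact isOpen_lt continuous_const cont_p
  · exact isOpen_lt cont_p continuous_const
  · ext x
    simp only [Set.mem_compl_iff, Set.mem_setOf_eq, Set.mem_union]
    constructor
    · intro h; rcases lt_trichotomy ((x 0) ^ 2 + (x 1) ^ 2 - (x 2) ^ 2 - (x 3) ^ 2 + x 4) 0 with h1|h1|h1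
      · exact Or.inr h1
      · exact absurd h1 h
      · exact Or.inl h1
    · rintro (h|h) <;> intro he <;> rw [he] at h <;> exact lt_irrefl 0 h
end

section
/- Let b₁, b₂, A₂₃, A₂₄, A₂₅, A₃₄, A₃₅, A₄₅ be real numbers and let M be the 4 × 8 real matrix with rows: row 0 = (0, b₂A₄₅, −b₂A₃₅, b₂A₃₄, 0, −b₁A₄₅, b₁A₃₅, −b₁A₃₄); row 1 = (b₂A₄₅, 0, −b₂A₂₅, b₂A₂₄, −b₁A₄₅, 0, b₁A₂₅, −b₁A₂₄); row 2 = (b₂A₃₅, −b₂A₂₅, 0, b₂A₂₃, −b₁A₃₅, b₁A₂₅, 0, −b₁A₂₃); row 3 = (b₂A₃₄, −b₂A₂₄, b₂A₂₃, 0, −b₁A₃₄, b₁A₂₄, −b₁A₂₃, 0). Then either M = 0 (rank 0) or the rank of M is at least 2; in particular the rank of M is never 1. -/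
/-- A nonzero `2 × 2` minor forces the rank of a `4 × 8` real matrix to be at
least `2`. -/
lemma rank_ge_two_of_minor (M : Matrix (Fin 4) (Fin 8) ℝ) (f : Fin 2 → Fin 4)
    (g : Fin 2 → Fin 8) (h : (M.submatrix f g).det ≠ 0) : 2 ≤ M.rank := by
  have h1 : M.submatrix f g =
      (Matrix.of fun r k => if k = f r then (1:ℝ) else 0) * M *
      (Matrix.of fun l c => if l = g c then (1:ℝ) else 0) := by
    ext r c
    simp [Matrix.mul_apply, Finset.mul_sum, ite_and]
  have h2 : (M.submatrix f g).rank = 2 := by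
    rw [Matrix.rank_of_isUnit _ ((Matrix.isUnit_iff_isUnit_det _).mpr h.isUnit)]
    simp
  calc (2:ℕ) = (M.submatrix f g).rank := h2.symm
    _ ≤ _ := by
        rw [h1]
        exact le_trans (Matrix.rank_mul_le_left _ _) (Matrix.rank_mul_le_right _ _)

/-- The 4 × 8 coefficient matrix arising in Case 1 of the ampleness proof for
(3,5)-distributions is either zero or has rank at least `2`; in particular its
rank is never `1`. -/
theorem rank_case1_matrix (b₁ b₂ A₂₃ A₂₄ A₂₅ A₃₄ A₃₅ A₄₅ : ℝ)
    (M : Matrix (Fin 4) (Fin 8) ℝ)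
    (hM : M = !![0, b₂*A₄₅, -(b₂*A₃₅), b₂*A₃₄, 0, -(b₁*A₄₅), b₁*A₃₅, -(b₁*A₃₄);
                 b₂*A₄₅, 0, -(b₂*A₂₅), b₂*A₂₄, -(b₁*A₄₅), 0, b₁*A₂₅, -(b₁*A₂₄);
                 b₂*A₃₅, -(b₂*A₂₅), 0, b₂*A₂₃, -(b₁*A₃₅), b₁*A₂₅, 0, -(b₁*A₂₃);
                 b₂*A₃₄, -(b₂*A₂₄), b₂*A₂₃, 0, -(b₁*A₃₄), b₁*A₂₄, -(b₁*A₂₃), 0]) :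
    M = 0 ∨ 2 ≤ M.rank := by
  rcases eq_or_ne (b₂*A₄₅) 0 with h1 | h
  case inr =>
    have e : M.submatrix ![0,1] ![0,1] = !![0, b₂*A₄₅; b₂*A₄₅, 0] := by
      subst hM; ext i j; fin_cases i <;> fin_cases j <;> rfl
    exact Or.inr (rank_ge_two_of_minor M _ _ (by
      rw [e]; simp [Matrix.det_fin_two_of, mul_self_eq_zero, h]))
  rcases eq_or_ne (b₂*A₃₅) 0 with h2 | h
  case inr =>
    have e : M.submatrix ![0,2] ![0,2] = !![0, -(b₂*A₃₅); b₂*A₃₅, 0] := by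
      subst hM; ext i j; fin_cases i <;> fin_cases j <;> rfl
    exact Or.inr (rank_ge_two_of_minor M _ _ (by
      rw [e]; simp [Matrix.det_fin_two_of, mul_self_eq_zero, h]))
  rcases eq_or_ne (b₂*A₃₄) 0 with h3 | h
  case inr =>
    have e : M.submatrix ![0,3] ![0,3] = !![0, b₂*A₃₄; b₂*A₃₄, 0] := by
      subst hM; ext i j; fin_cases i <;> fin_cases j <;> rfl
    exact Or.inr (rank_ge_two_of_minor M _ _ (by
      rw [e]; simp [Matrix.det_fin_two_of, mul_self_eq_zero, h]))
  rcases eq_or_ne (b₂*A₂₅) 0 with h4 | h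
  case inr =>
    have e : M.submatrix ![1,2] ![1,2] = !![0, -(b₂*A₂₅); -(b₂*A₂₅), 0] := by
      subst hM; ext i j; fin_cases i <;> fin_cases j <;> rfl
    exact Or.inr (rank_ge_two_of_minor M _ _ (by
      rw [e]; simp [Matrix.det_fin_two_of, mul_self_eq_zero, h]))
  rcases eq_or_ne (b₂*A₂₄) 0 with h5 | h
  case inr =>
    have e : M.submatrix ![1,3] ![1,3] = !![0, b₂*A₂₄; -(b₂*A₂₄), 0] := by
      subst hM; ext i j; fin_cases i <;> fin_cases j <;> rfl
    exact Or.inr (rank_ge_two_of_minor M _ _ (by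
      rw [e]; simp [Matrix.det_fin_two_of, mul_self_eq_zero, h]))
  rcases eq_or_ne (b₂*A₂₃) 0 with h6 | h
  case inr =>
    have e : M.submatrix ![2,3] ![2,3] = !![0, b₂*A₂₃; b₂*A₂₃, 0] := by
      subst hM; ext i j; fin_cases i <;> fin_cases j <;> rfl
    exact Or.inr (rank_ge_two_of_minor M _ _ (by
      rw [e]; simp [Matrix.det_fin_two_of, mul_self_eq_zero, h]))
  rcases eq_or_ne (b₁*A₄₅) 0 with h7 | h
  case inr =>
    have e : M.submatrix ![0,1] ![4,5] = !![0, -(b₁*A₄₅); -(b₁*A₄₅), 0] := by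
      subst hM; ext i j; fin_cases i <;> fin_cases j <;> rfl
    exact Or.inr (rank_ge_two_of_minor M _ _ (by
      rw [e]; simp [Matrix.det_fin_two_of, mul_self_eq_zero, h]))
  rcases eq_or_ne (b₁*A₃₅) 0 with h8 | h
  case inr =>
    have e : M.submatrix ![0,2] ![4,6] = !![0, b₁*A₃₅; -(b₁*A₃₅), 0] := by
      subst hM; ext i j; fin_cases i <;> fin_cases j <;> rfl
    exact Or.inr (rank_ge_two_of_minor M _ _ (by
      rw [e]; simp [Matrix.det_fin_two_of, mul_self_eq_zero, h]))
  rcases eq_or_ne (b₁*A₃₄) 0 with h9 | h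
  case inr =>
    have e : M.submatrix ![0,3] ![4,7] = !![0, -(b₁*A₃₄); -(b₁*A₃₄), 0] := by
      subst hM; ext i j; fin_cases i <;> fin_cases j <;> rfl
    exact Or.inr (rank_ge_two_of_minor M _ _ (by
      rw [e]; simp [Matrix.det_fin_two_of, mul_self_eq_zero, h]))
  rcases eq_or_ne (b₁*A₂₅) 0 with h10 | h
  case inr =>
    have e : M.submatrix ![1,2] ![5,6] = !![0, b₁*A₂₅; b₁*A₂₅, 0] := by
      subst hM; ext i j; fin_cases i <;> fin_cases j <;> rfl
    exact Or.inr (rank_ge_two_of_minor M _ _ (by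
      rw [e]; simp [Matrix.det_fin_two_of, mul_self_eq_zero, h]))
  rcases eq_or_ne (b₁*A₂₄) 0 with h11 | h
  case inr =>
    have e : M.submatrix ![1,3] ![5,7] = !![0, -(b₁*A₂₄); b₁*A₂₄, 0] := by
      subst hM; ext i j; fin_cases i <;> fin_cases j <;> rfl
    exact Or.inr (rank_ge_two_of_minor M _ _ (by
      rw [e]; simp [Matrix.det_fin_two_of, mul_self_eq_zero, h]))
  rcases eq_or_ne (b₁*A₂₃) 0 with h12 | h
  case inr =>
    have e : M.submatrix ![2,3] ![6,7] = !![0, -(b₁*A₂₃); -(b₁*A₂₃), 0] := by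
      subst hM; ext i j; fin_cases i <;> fin_cases j <;> rfl
    exact Or.inr (rank_ge_two_of_minor M _ _ (by
      rw [e]; simp [Matrix.det_fin_two_of, mul_self_eq_zero, h]))
  left
  subst hM
  rw [h1, h2, h3, h4, h5, h6, h7, h8, h9, h10, h11, h12, neg_zero]
  ext i j
  fin_cases i <;> fin_cases j <;> rfl
end

section
/- Let E be a 3-dimensional real vector space, D ⊆ E a 2-dimensional subspace, and ℓ ∈ E a vector with ℓ ∉ D. Let ω₁ and ω₂ be alternating bilinear forms on E that vanish on D (that is, ωᵢ(u, v) = 0 for all u, v ∈ D). Then there exist linear functionals η, θ₁, θ₂ on E such that η vanishes on D, η(ℓ) = 1, θᵢ(ℓ) = 0, and ωᵢ(v, w) = η(v)·θᵢ(w) − η(w)·θᵢ(v) for all v, w ∈ E and i = 1, 2 (that is, ωᵢ = η ∧ θᵢ). Moreover, if ω₁ and ω₂ are linearly independent, then the restrictions of θ₁ and θ₂ to D are linearly independent. -/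
/-!
Choose `η` with kernel `D` and `η ℓ = 1`, so that every `v` splits as `(v - η v • ℓ) + η v • ℓ`
with first summand in `D`. Expanding an alternating form `ω` that vanishes on `D` along this
splitting gives `ω = η ∧ ω(ℓ, ·)`. Since `θ ↦ η ∧ θ` is linear, independence of the `ωᵢ` passes to
the `θᵢ = ωᵢ(ℓ, ·)`; these vanish at `ℓ`, so a combination of them vanishing on `D` vanishes.
-/

open Module

section

variable {K E : Type*} [Field K] [AddCommGroup E] [Module K E]

namespace Module.Dual

def wedge (η : Dual K E) : Dual K E →ₗ[K] E →ₗ[K] E →ₗ[K] K where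
  toFun θ := η.smulRight θ - θ.smulRight η
  map_add' θ θ' := by ext; simp; ring
  map_smul' c θ := by ext; simp; ring

@[simp]
theorem wedge_apply (η θ : Dual K E) (v w : E) : η.wedge θ v w = η v * θ w - η w * θ v := by
  simp [wedge, mul_comm]

end Module.Dual

variable {D : Submodule K E} {η : Dual K E} {ℓ : E}

theorem sub_smul_mem_of_ker_eq (hker : LinearMap.ker η = D) (hηℓ : η ℓ = 1) (v : E) :
    v - η v • ℓ ∈ D := by
  simp [← hker, hηℓ]

theorem LinearMap.IsAlt.eq_wedge_of_ker_eq {ω : E →ₗ[K] E →ₗ[K] K} (hω : ω.IsAlt)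
    (hωD : ∀ u ∈ D, ∀ v ∈ D, ω u v = 0) (hker : LinearMap.ker η = D) (hηℓ : η ℓ = 1) :
    ω = η.wedge (ω ℓ) := by
  ext v w
  have hv := sub_smul_mem_of_ker_eq hker hηℓ v
  have hw := sub_smul_mem_of_ker_eq hker hηℓ w
  have := hωD _ hv _ hw
  simp only [map_sub, map_smul, LinearMap.sub_apply, LinearMap.smul_apply, smul_eq_mul,
    hω.self_eq_zero] at this
  rw [Dual.wedge_apply]
  linear_combination this - η w * hω.neg ℓ v

theorem dual_eq_zero_of_forall_mem_of_apply_eq_zero {θ : Dual K E} (hker : LinearMap.ker η = D)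
    (hηℓ : η ℓ = 1) (hθD : ∀ v ∈ D, θ v = 0) (hθℓ : θ ℓ = 0) : θ = 0 := by
  ext v
  simpa [hθℓ] using hθD _ (sub_smul_mem_of_ker_eq hker hηℓ v)

theorem linearIndependent_dualRestrict_of_wedge {ι : Type*} {θ : ι → Dual K E}
    (hker : LinearMap.ker η = D) (hηℓ : η ℓ = 1) (hθℓ : ∀ i, θ i ℓ = 0)
    (hθ : LinearIndependent K (η.wedge ∘ θ)) : LinearIndependent K (D.dualRestrict ∘ θ) := by
  refine (hθ.of_comp _).map (Submodule.disjoint_def.mpr fun φ hφ hφD => ?_)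
  have hφℓ : φ ℓ = 0 := by
    have hspan : Submodule.span K (Set.range θ) ≤ LinearMap.ker (Dual.eval K E ℓ) :=
      Submodule.span_le.mpr (Set.range_subset_iff.mpr hθℓ)
    exact hspan hφ
  refine dual_eq_zero_of_forall_mem_of_apply_eq_zero hker hηℓ (fun v hv => ?_) hφℓ
  simpa using LinearMap.congr_fun (LinearMap.mem_ker.mp hφD) ⟨v, hv⟩

theorem exists_dual_ker_eq_of_notMem [FiniteDimensional K E]
    (hD : finrank K D + 1 = finrank K E) (hℓ : ℓ ∉ D) :
    ∃ η : Dual K E, LinearMap.ker η = D ∧ η ℓ = 1 := by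
  obtain ⟨f, hfℓ, hfD⟩ := D.exists_dual_map_eq_bot_of_notMem hℓ inferInstance
  refine ⟨(f ℓ)⁻¹ • f, ?_, inv_mul_cancel₀ hfℓ⟩
  rw [LinearMap.ker_smul _ _ (inv_ne_zero hfℓ)]
  refine (Submodule.eq_of_le_of_finrank_le (LinearMap.le_ker_iff_map.mpr hfD) ?_).symm
  have hf : LinearMap.ker f ≠ ⊤ := fun h => hfℓ (LinearMap.mem_ker.mp (h ▸ Submodule.mem_top))
  have := Submodule.finrank_lt hf
  omega

end

/-- In a 3-dimensional real vector space `E` with a 2-dimensional subspace `D` and a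
vector `ℓ ∉ D`, two alternating bilinear forms `ω₁, ω₂` vanishing on `D` can be
written as `ωᵢ = η ∧ θᵢ` with `η` annihilating `D`, `η ℓ = 1`, `θᵢ ℓ = 0`; moreover
if `ω₁, ω₂` are linearly independent then so are the restrictions of `θ₁, θ₂` to `D`. -/
theorem alternating_forms_factorization (E : Type*) [AddCommGroup E] [Module ℝ E]
    [FiniteDimensional ℝ E] (hE : Module.finrank ℝ E = 3)
    (D : Submodule ℝ E) (hD : Module.finrank ℝ D = 2)
    (ℓ : E) (hℓ : ℓ ∉ D)
    (ω₁ ω₂ : E →ₗ[ℝ] E →ₗ[ℝ] ℝ)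
    (halt₁ : ∀ v, ω₁ v v = 0) (halt₂ : ∀ v, ω₂ v v = 0)
    (hD₁ : ∀ u ∈ D, ∀ v ∈ D, ω₁ u v = 0)
    (hD₂ : ∀ u ∈ D, ∀ v ∈ D, ω₂ u v = 0) :
    ∃ η θ₁ θ₂ : E →ₗ[ℝ] ℝ,
      (∀ v ∈ D, η v = 0) ∧ η ℓ = 1 ∧ θ₁ ℓ = 0 ∧ θ₂ ℓ = 0 ∧
      (∀ v w, ω₁ v w = η v * θ₁ w - η w * θ₁ v) ∧
      (∀ v w, ω₂ v w = η v * θ₂ w - η w * θ₂ v) ∧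
      (LinearIndependent ℝ ![ω₁, ω₂] →
        LinearIndependent ℝ ![θ₁.domRestrict D, θ₂.domRestrict D]) := by
  obtain ⟨η, hker, hηℓ⟩ := exists_dual_ker_eq_of_notMem (by omega) hℓ
  have h₁ := LinearMap.IsAlt.eq_wedge_of_ker_eq halt₁ hD₁ hker hηℓ
  have h₂ := LinearMap.IsAlt.eq_wedge_of_ker_eq halt₂ hD₂ hker hηℓ
  refine ⟨η, ω₁ ℓ, ω₂ ℓ, fun v hv => by rwa [← hker] at hv, hηℓ, halt₁ ℓ, halt₂ ℓ,
    fun v w => by rw [← Dual.wedge_apply, ← h₁], fun v w => by rw [← Dual.wedge_apply, ← h₂],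
    fun hω => ?_⟩
  have hθℓ : ∀ i, ![ω₁ ℓ, ω₂ ℓ] i ℓ = 0 := Fin.forall_fin_two.mpr ⟨halt₁ ℓ, halt₂ ℓ⟩
  have hwedge : ![ω₁, ω₂] = η.wedge ∘ ![ω₁ ℓ, ω₂ ℓ] := by
    ext i : 1
    fin_cases i
    exacts [h₁, h₂]
  have hrestrict : ![(ω₁ ℓ).domRestrict D, (ω₂ ℓ).domRestrict D] =
      D.dualRestrict ∘ ![ω₁ ℓ, ω₂ ℓ] := by
    ext i : 1
    fin_cases i <;> rfl
  rw [hrestrict]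
  exact linearIndependent_dualRestrict_of_wedge hker hηℓ hθℓ (hwedge ▸ hω)
end
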